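/- arXiv:2303.12785 — 2 statements merged into one kernel-verified Lean document; each statement's English description precedes it below -/
import Mathlib

section
/- Optimality of the recursively defined Boltzmann extended policy: for every extended policy π = (π^{(1)},…,π^{(n)}) of horizon n whose component policies are everywhere positive, and for every state s ∈ S and every 1 ≤ i ≤ n, V^{(i)}_π(s) ≤ V*^{(i)}(s). -/
/-!
At each step the optimal value is a log-partition function: by the Gibbs variational
inequality (Jensen for `log`), `τ log ∑ₐ μ(a) e^{q(a)/τ}` bounds the entropy-regularised value
`∑ₐ w(a) (q(a) − τ log(w(a)/μ(a)))` of every distribution `w`, with equality at the Boltzmann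
distribution `w ∝ μ e^{q/τ}`. Since the regularised value is monotone in `q`, induction on the
horizon gives `Q ≤ Q*` and hence `V ≤ V*`.
-/

open Finset

section Gibbs

open Real

variable {A : Type*} [Fintype A]

noncomputable def regularizedValue (τ : ℝ) (μ w q : A → ℝ) : ℝ :=
  ∑ a, w a * (q a - τ * log (w a / μ a))

noncomputable def logPartition (τ : ℝ) (μ q : A → ℝ) : ℝ :=
  τ * log (∑ a, μ a * exp (q a / τ))

noncomputable def boltzmann (τ : ℝ) (μ q : A → ℝ) (a : A) : ℝ :=
  μ a * exp (q a / τ) / ∑ a', μ a' * exp (q a' / τ)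

theorem regularizedValue_mono {τ : ℝ} {μ w q q' : A → ℝ} (hw : ∀ a, 0 ≤ w a)
    (hq : ∀ a, q a ≤ q' a) : regularizedValue τ μ w q ≤ regularizedValue τ μ w q' := by
  unfold regularizedValue
  gcongr with a
  · exact hw a
  · exact hq a

theorem regularizedValue_le_logPartition {τ : ℝ} (hτ : 0 < τ) {μ w : A → ℝ} (q : A → ℝ)
    (hμ : ∀ a, 0 < μ a) (hw : ∀ a, 0 < w a) (hw_sum : ∑ a, w a = 1) :
    regularizedValue τ μ w q ≤ logPartition τ μ q := by
  set x : A → ℝ := fun a => μ a * exp (q a / τ) / w a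
  have hx : ∀ a, 0 < x a := fun a => by positivity [hμ a, hw a]
  have hterm : ∀ a, w a * (q a - τ * log (w a / μ a)) = τ * (w a * log (x a)) := fun a => by
    rw [log_div (by positivity [hμ a]) (hw a).ne', log_mul (hμ a).ne' (exp_pos _).ne', log_exp,
      log_div (hw a).ne' (hμ a).ne']
    field_simp
    ring
  have hwx : ∑ a, w a * x a = ∑ a, μ a * exp (q a / τ) :=
    sum_congr rfl fun a _ => mul_div_cancel₀ _ (hw a).ne'
  have jensen : ∑ a, w a * log (x a) ≤ log (∑ a, w a * x a) := by
    simpa only [smul_eq_mul] using strictConcaveOn_log_Ioi.concaveOn.le_map_sum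
      (t := univ) (fun a _ => (hw a).le) hw_sum (fun a _ => hx a)
  rw [regularizedValue, logPartition, sum_congr rfl fun a _ => hterm a, ← mul_sum, ← hwx]
  exact mul_le_mul_of_nonneg_left jensen hτ.le

theorem regularizedValue_boltzmann [Nonempty A] {τ : ℝ} (hτ : τ ≠ 0) {μ : A → ℝ} (q : A → ℝ)
    (hμ : ∀ a, 0 < μ a) :
    regularizedValue τ μ (boltzmann τ μ q) q = logPartition τ μ q := by
  set Z := ∑ a, μ a * exp (q a / τ)
  have hZ : 0 < Z := sum_pos (fun a _ => by positivity [hμ a]) univ_nonempty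
  have hsum : ∑ a, boltzmann τ μ q a = 1 := by
    simp only [boltzmann, ← sum_div]
    exact div_self hZ.ne'
  have hterm : ∀ a, q a - τ * log (boltzmann τ μ q a / μ a) = logPartition τ μ q := fun a => by
    rw [boltzmann, div_right_comm, mul_div_cancel_left₀ _ (hμ a).ne',
      log_div (exp_pos _).ne' hZ.ne', log_exp, logPartition]
    field_simp
    ring
  simp only [regularizedValue, hterm, ← sum_mul, hsum, one_mul]

end Gibbs

theorem extended_policy_value_le_optimal_general
    {S A : Type*} [Fintype S] [Fintype A] [Nonempty A]
    (τ : ℝ) (hτ : 0 < τ)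
    (pibar : S → A → ℝ) (hpibar_pos : ∀ s a, 0 < pibar s a)
    (r : A → S → ℝ)
    (p : S → A → S → ℝ) (hp_nonneg : ∀ s a s', 0 ≤ p s a s')
    -- the extended policy `π`, with `π i` its `i`-step component
    (π : ℕ → S → A → ℝ)
    (hπ_pos : ∀ i s a, 0 < π i s a) (hπ_sum : ∀ i s, ∑ a, π i s a = 1)
    -- value and Q functions of `π`, defined recursively
    (V : ℕ → S → ℝ) (Q : ℕ → A → S → ℝ)
    (hV0 : ∀ s, V 0 s = 0)
    (hQ : ∀ i a s, Q (i + 1) a s = r a s + ∑ s', p s a s' * V i s')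
    (hV : ∀ i s, V (i + 1) s = ∑ a, π (i + 1) s a *
      (Q (i + 1) a s - τ * Real.log (π (i + 1) s a / pibar s a)))
    -- optimal extended policy and its value and Q functions, defined recursively
    (Vstar : ℕ → S → ℝ) (Qstar : ℕ → A → S → ℝ) (pistar : ℕ → S → A → ℝ)
    (hVstar0 : ∀ s, Vstar 0 s = 0)
    (hQstar : ∀ i a s, Qstar (i + 1) a s = r a s + ∑ s', p s a s' * Vstar i s')
    (hpistar : ∀ i s a, pistar (i + 1) s a =
      pibar s a * Real.exp (Qstar (i + 1) a s / τ) /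
        ∑ a', pibar s a' * Real.exp (Qstar (i + 1) a' s / τ))
    (hVstar : ∀ i s, Vstar (i + 1) s = ∑ a, pistar (i + 1) s a *
      (Qstar (i + 1) a s - τ * Real.log (pistar (i + 1) s a / pibar s a)))
    (i : ℕ) (s : S) :
    V i s ≤ Vstar i s := by
  induction i generalizing s with
  | zero => rw [hV0, hVstar0]
  | succ i ih =>
    have hQ_le : ∀ a, Q (i + 1) a s ≤ Qstar (i + 1) a s := fun a => by
      rw [hQ, hQstar]
      gcongr with s'
      · exact hp_nonneg s a s'
      · exact ih s'
    have hpistar_eq : pistar (i + 1) s = boltzmann τ (pibar s) (Qstar (i + 1) · s) :=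
      funext (hpistar i s)
    calc V (i + 1) s
        = regularizedValue τ (pibar s) (π (i + 1) s) (Q (i + 1) · s) := hV i s
      _ ≤ regularizedValue τ (pibar s) (π (i + 1) s) (Qstar (i + 1) · s) :=
          regularizedValue_mono (fun a => (hπ_pos (i + 1) s a).le) hQ_le
      _ ≤ logPartition τ (pibar s) (Qstar (i + 1) · s) :=
          regularizedValue_le_logPartition hτ _ (hpibar_pos s) (hπ_pos (i + 1) s)
            (hπ_sum (i + 1) s)
      _ = regularizedValue τ (pibar s) (pistar (i + 1) s) (Qstar (i + 1) · s) := by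
          rw [hpistar_eq, regularizedValue_boltzmann hτ.ne' _ (hpibar_pos s)]
      _ = Vstar (i + 1) s := (hVstar i s).symm

/-- Optimality of the recursively defined Boltzmann extended
policy: for every extended policy `π = (π^{(1)},…,π^{(n)})` with everywhere
positive components, every state `s` and every `1 ≤ i ≤ n`,
`V^{(i)}_π(s) ≤ V*^{(i)}(s)`. -/
theorem extended_policy_value_le_optimal
    {S A : Type*} [Fintype S] [Fintype A] [Nonempty S] [Nonempty A]
    (τ : ℝ) (hτ : 0 < τ)
    (pibar : S → A → ℝ) (hpibar_pos : ∀ s a, 0 < pibar s a)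
    (hpibar_sum : ∀ s, ∑ a, pibar s a = 1)
    (r : A → S → ℝ)
    (p : S → A → S → ℝ) (hp_nonneg : ∀ s a s', 0 ≤ p s a s')
    (hp_sum : ∀ s a, ∑ s', p s a s' = 1)
    (n : ℕ)
    -- the extended policy `π`, with `π i` its `i`-step component
    (π : ℕ → S → A → ℝ)
    (hπ_pos : ∀ i s a, 0 < π i s a) (hπ_sum : ∀ i s, ∑ a, π i s a = 1)
    -- value and Q functions of `π`, defined recursively
    (V : ℕ → S → ℝ) (Q : ℕ → A → S → ℝ)
    (hV0 : ∀ s, V 0 s = 0)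
    (hQ : ∀ i a s, Q (i + 1) a s = r a s + ∑ s', p s a s' * V i s')
    (hV : ∀ i s, V (i + 1) s = ∑ a, π (i + 1) s a *
      (Q (i + 1) a s - τ * Real.log (π (i + 1) s a / pibar s a)))
    -- optimal extended policy and its value and Q functions, defined recursively
    (Vstar : ℕ → S → ℝ) (Qstar : ℕ → A → S → ℝ) (pistar : ℕ → S → A → ℝ)
    (hVstar0 : ∀ s, Vstar 0 s = 0)
    (hQstar : ∀ i a s, Qstar (i + 1) a s = r a s + ∑ s', p s a s' * Vstar i s')
    (hpistar : ∀ i s a, pistar (i + 1) s a =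
      pibar s a * Real.exp (Qstar (i + 1) a s / τ) /
        ∑ a', pibar s a' * Real.exp (Qstar (i + 1) a' s / τ))
    (hVstar : ∀ i s, Vstar (i + 1) s = ∑ a, pistar (i + 1) s a *
      (Qstar (i + 1) a s - τ * Real.log (pistar (i + 1) s a / pibar s a)))
    (i : ℕ) (hi : 1 ≤ i) (hin : i ≤ n) (s : S) :
    V i s ≤ Vstar i s :=
  extended_policy_value_le_optimal_general τ hτ pibar hpibar_pos r p hp_nonneg π hπ_pos hπ_sum V Q
    hV0 hQ hV Vstar Qstar pistar hVstar0 hQstar hpistar hVstar i s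
end

section
/- Global optimality of MPG (finite state space, critical-point form): let π_θ be an extended policy with softmax-linear components and disjoint parameters, let 1 ≤ m ≤ n, suppose π^{(k)}_{θ^{(k)}} = π*^{(k)} for all 1 ≤ k ≤ m−1 and ∇_{θ^{(m)}} J_n(π_θ) = 0 (in particular this holds at any limit of ideal MPG updates). Define d : A × S → ℝ by d(a,s) := ρ^{(n−m)}(s) π^{(m)}(a|s) ( log(π^{(m)}(a|s)/π*^{(m)}(a|s)) − D_KL(π^{(m)}‖π*^{(m)})(s) ). Then for every eigenvalue–eigenvector pair (λ, e) of the symmetric positive-semidefinite matrix (Θ^{(m)}((a,s),(a',s')))_{(a,s),(a',s')∈A×S} with λ > 0, ⟨d, e⟩ = 0. In particular, if that matrix is positive definite and ρ^{(n−m)}(s) > 0 for every s (which holds e.g. when m = n, or when p(s,a,s') > 0 for all s,a,s'), then π^{(m)} = π*^{(m)}. -/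
/-!
Only the `m`-step component of the policy depends on `θ`, and the components below it are
optimal. Telescoping the Bellman recursion through the frozen stages above `m` and applying the
Gibbs variational principle at stage `m` gives
`J(θ') = C - τ ∑ₛ ρ(s) KL(π_θ'(·|s) ‖ π*(·|s))`. Differentiating the divergence of a softmax
policy yields `∇J(θ) = -∑ₓ d(x) ψ(x)`, so at a critical point `d` lies in the kernel of the Gram
matrix `M`. It is then orthogonal to every eigenvector with nonzero eigenvalue, and vanishes when
`M` is positive definite; with `ρ > 0` this makes `log(π/π*)` constant in `a`, hence `π = π*`.
-/

open scoped RealInnerProductSpace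
open Matrix

noncomputable section

open Real Finset InnerProductSpace

theorem hasFDerivAt_mul_exp_div {E : Type*} [NormedAddCommGroup E] [NormedSpace ℝ E] (b τ : ℝ)
    {f : E → ℝ} {f' : StrongDual ℝ E} {x : E} (hf : HasFDerivAt f f' x) :
    HasFDerivAt (fun y => b * exp (f y / τ)) ((τ⁻¹ * (b * exp (f x / τ))) • f') x := by
  have := ((hf.mul_const τ⁻¹).exp).const_mul b
  simp only [← div_eq_mul_inv, smul_smul] at this
  exact this.congr_fderiv (by ring_nf)

section Gibbs

variable {A : Type*} [Fintype A]

def partitionFn (pibar : A → ℝ) (τ : ℝ) (q : A → ℝ) : ℝ := ∑ b, pibar b * exp (q b / τ)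

def gibbs (pibar : A → ℝ) (τ : ℝ) (q : A → ℝ) (a : A) : ℝ :=
  pibar a * exp (q a / τ) / partitionFn pibar τ q

def klDiv (ν μ : A → ℝ) : ℝ := ∑ a, ν a * log (ν a / μ a)

theorem sum_smul_smul_sub_sum_smul {M : Type*} [AddCommGroup M] [Module ℝ M]
    (c g : A → ℝ) (v : A → M) :
    ∑ a, c a • g a • (v a - ∑ b, g b • v b) = ∑ a, (g a * (c a - ∑ b, g b * c b)) • v a := by
  simp only [smul_sub, sum_sub_distrib, mul_sub, sub_smul, smul_smul, mul_comm (c _),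
    mul_comm (g _) (∑ b, _), ← sum_smul]
  simp only [mul_smul, smul_sum]

theorem eq_of_forall_mul_log_div_sub_klDiv_eq_zero {ν μ : A → ℝ} (hν : ∀ a, 0 < ν a)
    (hμ : ∀ a, 0 < μ a) (hνsum : ∑ a, ν a = 1) (hμsum : ∑ a, μ a = 1) {w : ℝ} (hw : 0 < w)
    (h : ∀ a, w * ν a * (log (ν a / μ a) - klDiv ν μ) = 0) : ν = μ := by
  have hscale : ∀ a, ν a = exp (klDiv ν μ) * μ a := fun a => by
    have hlog := sub_eq_zero.1 ((mul_eq_zero.1 (h a)).resolve_left (mul_pos hw (hν a)).ne')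
    rw [← hlog, exp_log (div_pos (hν a) (hμ a)), div_mul_cancel₀ _ (hμ a).ne']
  have hexp : exp (klDiv ν μ) = 1 := by
    simpa [← mul_sum, hscale, hμsum] using hνsum
  funext a
  rw [hscale, hexp, one_mul]

variable {E : Type*} [NormedAddCommGroup E] [NormedSpace ℝ E] {q : A → E → ℝ}
  {q' : A → StrongDual ℝ E} {x : E}

theorem hasFDerivAt_partitionFn (pibar : A → ℝ) (τ : ℝ) (hq : ∀ a, HasFDerivAt (q a) (q' a) x) :
    HasFDerivAt (fun y => partitionFn pibar τ (q · y))
      (∑ a, (τ⁻¹ * (pibar a * exp (q a x / τ))) • q' a) x :=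
  HasFDerivAt.fun_sum fun a _ => hasFDerivAt_mul_exp_div (pibar a) τ (hq a)

variable [Nonempty A] {pibar : A → ℝ}

theorem partitionFn_pos (hpibar : ∀ a, 0 < pibar a) (τ : ℝ) (q : A → ℝ) :
    0 < partitionFn pibar τ q :=
  sum_pos (fun a _ => mul_pos (hpibar a) (exp_pos _)) univ_nonempty

theorem gibbs_pos (hpibar : ∀ a, 0 < pibar a) (τ : ℝ) (q : A → ℝ) (a : A) :
    0 < gibbs pibar τ q a :=
  div_pos (mul_pos (hpibar a) (exp_pos _)) (partitionFn_pos hpibar τ q)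

theorem sum_gibbs (hpibar : ∀ a, 0 < pibar a) (τ : ℝ) (q : A → ℝ) :
    ∑ a, gibbs pibar τ q a = 1 := by
  simp only [gibbs, ← sum_div]
  exact div_self (partitionFn_pos hpibar τ q).ne'

theorem log_gibbs_div (hpibar : ∀ a, 0 < pibar a) (τ : ℝ) (q : A → ℝ) (a : A) :
    log (gibbs pibar τ q a / pibar a) = q a / τ - log (partitionFn pibar τ q) := by
  have hratio : gibbs pibar τ q a / pibar a = exp (q a / τ) / partitionFn pibar τ q := by
    have := (hpibar a).ne'
    rw [gibbs]; field_simp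
  rw [hratio, log_div (exp_pos _).ne' (partitionFn_pos hpibar τ q).ne', log_exp]

/-- Gibbs variational principle. -/
theorem sum_mul_sub_log_div_eq (hpibar : ∀ a, 0 < pibar a) {τ : ℝ} (hτ : τ ≠ 0) (q : A → ℝ)
    {ν : A → ℝ} (hν : ∑ a, ν a = 1) :
    ∑ a, ν a * (q a - τ * log (ν a / pibar a)) =
      τ * log (partitionFn pibar τ q) - τ * klDiv ν (gibbs pibar τ q) := by
  have hterm : ∀ a, ν a * (q a - τ * log (ν a / pibar a)) =
      τ * log (partitionFn pibar τ q) * ν a - τ * (ν a * log (ν a / gibbs pibar τ q a)) := by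
    intro a
    rcases eq_or_ne (ν a) 0 with hνa | hνa
    · simp [hνa]
    have hsplit : ν a / pibar a = ν a / gibbs pibar τ q a * (gibbs pibar τ q a / pibar a) := by
      rw [div_mul_div_cancel₀ (gibbs_pos hpibar τ q a).ne']
    rw [hsplit, log_mul (div_ne_zero hνa (gibbs_pos hpibar τ q a).ne')
      (div_pos (gibbs_pos hpibar τ q a) (hpibar a)).ne', log_gibbs_div hpibar]
    field_simp
    ring
  rw [sum_congr rfl fun a _ => hterm a, sum_sub_distrib, ← mul_sum, hν, mul_one, klDiv, mul_sum]

theorem hasFDerivAt_gibbs (hpibar : ∀ a, 0 < pibar a) (τ : ℝ)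
    (hq : ∀ a, HasFDerivAt (q a) (q' a) x) (a : A) :
    HasFDerivAt (fun y => gibbs pibar τ (q · y) a)
      ((τ⁻¹ * gibbs pibar τ (q · x) a) • (q' a - ∑ b, gibbs pibar τ (q · x) b • q' b)) x := by
  have hZ := partitionFn_pos hpibar τ (q · x)
  have hinv := (hasDerivAt_inv hZ.ne').comp_hasFDerivAt x (hasFDerivAt_partitionFn pibar τ hq)
  refine ((hasFDerivAt_mul_exp_div (pibar a) τ (hq a)).fun_mul hinv).congr_fderiv ?_
  set Z := partitionFn pibar τ (q · x)
  simp only [gibbs, Function.comp_apply]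
  have hsum₁ : ∑ b, (τ⁻¹ * (pibar b * exp (q b x / τ))) • q' b =
      τ⁻¹ • ∑ b, (pibar b * exp (q b x / τ)) • q' b := by
    rw [smul_sum]; simp only [mul_smul]
  have hsum₂ : ∑ b, (pibar b * exp (q b x / τ) / Z) • q' b =
      Z⁻¹ • ∑ b, (pibar b * exp (q b x / τ)) • q' b := by
    rw [smul_sum]; simp only [div_eq_mul_inv, mul_comm _ Z⁻¹, mul_smul]
  rw [hsum₁, hsum₂]
  module

theorem hasFDerivAt_klDiv_gibbs (hpibar : ∀ a, 0 < pibar a) (τ : ℝ) {μ : A → ℝ}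
    (hμ : ∀ a, μ a ≠ 0) (hq : ∀ a, HasFDerivAt (q a) (q' a) x) :
    HasFDerivAt (fun y => klDiv (gibbs pibar τ (q · y)) μ)
      (τ⁻¹ • ∑ a, (gibbs pibar τ (q · x) a *
        (log (gibbs pibar τ (q · x) a / μ a) - klDiv (gibbs pibar τ (q · x)) μ)) • q' a) x := by
  have hg := hasFDerivAt_gibbs hpibar τ hq
  have hKL : ∑ b, gibbs pibar τ (q · x) b * (1 + log (gibbs pibar τ (q · x) b / μ b)) =
      1 + klDiv (gibbs pibar τ (q · x)) μ := by
    simp only [mul_add, mul_one, sum_add_distrib, sum_gibbs hpibar, klDiv]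
  set g := gibbs pibar τ (q · x)
  have hterm : ∀ a, HasFDerivAt
      (fun y => gibbs pibar τ (q · y) a * log (gibbs pibar τ (q · y) a / μ a))
      (τ⁻¹ • (1 + log (g a / μ a)) • g a • (q' a - ∑ b, g b • q' b)) x := by
    intro a
    have hga := (gibbs_pos hpibar τ (q · x) a).ne'
    have hμa := hμ a
    refine ((hg a).fun_mul (((hg a).mul_const (μ a)⁻¹).log (div_ne_zero hga hμa))).congr_fderiv ?_
    simp only [← div_eq_mul_inv, smul_smul, ← add_smul]
    congr 1
    field_simp
    ring
  refine (HasFDerivAt.fun_sum fun a _ => hterm a).congr_fderiv ?_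
  rw [← smul_sum, sum_smul_smul_sub_sum_smul, hKL]
  simp only [add_sub_add_left_eq_sub]

end Gibbs

theorem hasGradientAt_sum_mul_klDiv_gibbs {S A E : Type*} [Fintype S] [Fintype A] [Nonempty A]
    [NormedAddCommGroup E] [InnerProductSpace ℝ E] [CompleteSpace E]
    {pibar : S → A → ℝ} (hpibar : ∀ s a, 0 < pibar s a) (τ : ℝ) (w : S → ℝ)
    {μ : S → A → ℝ} (hμ : ∀ s a, μ s a ≠ 0) (ψ : A → S → E) (θ : E) :
    HasGradientAt (fun θ' => ∑ s, w s * klDiv (gibbs (pibar s) τ (fun a => ⟪θ', ψ a s⟫)) (μ s))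
      (τ⁻¹ • ∑ s, ∑ a, (w s * gibbs (pibar s) τ (fun a => ⟪θ, ψ a s⟫) a *
        (log (gibbs (pibar s) τ (fun a => ⟪θ, ψ a s⟫) a / μ s a) -
          klDiv (gibbs (pibar s) τ (fun a => ⟪θ, ψ a s⟫)) (μ s))) • ψ a s) θ := by
  have hinner : ∀ a s, HasFDerivAt (fun θ' => ⟪θ', ψ a s⟫) (toDual ℝ E (ψ a s)) θ :=
    fun a s => (toDual ℝ E (ψ a s)).hasFDerivAt.congr_of_eventuallyEq
      (Filter.Eventually.of_forall fun θ' => real_inner_comm _ _)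
  refine (HasFDerivAt.fun_sum fun s _ =>
    (hasFDerivAt_klDiv_gibbs (hpibar s) τ (hμ s) (hinner · s)).const_mul (w s)).congr_fderiv ?_
  simp only [map_smul, map_sum, smul_sum, smul_smul]
  refine sum_congr rfl fun s _ => sum_congr rfl fun a _ => ?_
  congr 1
  ring

section Bellman

variable {S A : Type*} [Fintype S] [Fintype A] (τ : ℝ) (pibar : S → A → ℝ) (r : A → S → ℝ)
  (p : S → A → S → ℝ)

def bellman (pol : S → A → ℝ) (v : S → ℝ) (s : S) : ℝ :=
  ∑ a, pol s a * (r a s + ∑ s', p s a s' * v s' - τ * log (pol s a / pibar s a))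

def occupancyStep (w : S → ℝ) (pol : S → A → ℝ) (s' : S) : ℝ :=
  ∑ s, w s * ∑ a, pol s a * p s a s'

theorem sum_mul_bellman_sub_bellman (w : S → ℝ) (pol : S → A → ℝ) (v v' : S → ℝ) :
    ∑ s, w s * (bellman τ pibar r p pol v s - bellman τ pibar r p pol v' s) =
      ∑ s, occupancyStep p w pol s * (v s - v' s) := by
  have hdiff : ∀ s, bellman τ pibar r p pol v s - bellman τ pibar r p pol v' s =
      ∑ a, pol s a * ∑ s', p s a s' * (v s' - v' s') := fun s => by
    simp only [bellman, ← sum_sub_distrib, ← mul_sub, sub_sub_sub_cancel_right,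
      add_sub_add_left_eq_sub]
  simp only [hdiff, occupancyStep, mul_sum, sum_mul, mul_assoc]
  rw [eq_comm, sum_comm]
  exact sum_congr rfl fun s _ => sum_comm

theorem eq_of_bellman_recursion {v v' : ℕ → S → ℝ} {pol pol' : ℕ → S → A → ℝ} (h0 : v 0 = v' 0)
    (hv : ∀ j, v (j + 1) = bellman τ pibar r p (pol (j + 1)) (v j))
    (hv' : ∀ j, v' (j + 1) = bellman τ pibar r p (pol' (j + 1)) (v' j))
    {k : ℕ} (hpol : ∀ j, 1 ≤ j → j ≤ k → pol j = pol' j) : v k = v' k := by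
  induction k with
  | zero => exact h0
  | succ k ih =>
    rw [hv, hv', hpol (k + 1) (by omega) le_rfl,
      ih fun j hj hjk => hpol j hj (by omega)]

theorem sum_mul_sub_eq_of_bellman_recursion {v v' : ℕ → S → ℝ} {pol pol' : ℕ → S → A → ℝ}
    (hv : ∀ j, v (j + 1) = bellman τ pibar r p (pol (j + 1)) (v j))
    (hv' : ∀ j, v' (j + 1) = bellman τ pibar r p (pol' (j + 1)) (v' j))
    {n : ℕ} {w : ℕ → S → ℝ} (hw : ∀ i, w (i + 1) = occupancyStep p (w i) (pol' (n - i)))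
    {k : ℕ} (hk : k ≤ n) (hpol : ∀ i < k, pol (n - i) = pol' (n - i)) :
    ∑ s, w 0 s * (v n s - v' n s) = ∑ s, w k s * (v (n - k) s - v' (n - k) s) := by
  induction k with
  | zero => rfl
  | succ k ih =>
    have hnk : n - k = n - (k + 1) + 1 := by omega
    have hpolk := hpol k (lt_add_one k)
    rw [ih (by omega) fun i hi => hpol i (by omega), hw, hnk, hv, hv']
    rw [hnk] at hpolk
    rw [hpolk, sum_mul_bellman_sub_bellman]

theorem sum_eq_add_sum_mul_sub_of_bellman_recursion {X : Type*} {V : X → ℕ → S → ℝ}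
    {pol : X → ℕ → S → A → ℝ}
    (hV : ∀ x j, V x (j + 1) = bellman τ pibar r p (pol x (j + 1)) (V x j))
    {m n : ℕ} (hmn : m ≤ n) (hfix : ∀ x x' j, j ≠ m → pol x j = pol x' j) {x₀ : X}
    {w : ℕ → S → ℝ} (hw0 : w 0 = 1) (hw : ∀ i, w (i + 1) = occupancyStep p (w i) (pol x₀ (n - i)))
    (x : X) : ∑ s, V x n s = ∑ s, V x₀ n s + ∑ s, w (n - m) s * (V x m s - V x₀ m s) := by
  have h := sum_mul_sub_eq_of_bellman_recursion τ pibar r p (hV x) (hV x₀) hw (Nat.sub_le n m)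
    fun i hi => hfix x x₀ _ (by omega)
  rw [Nat.sub_sub_self hmn, hw0] at h
  simp only [Pi.one_apply, one_mul, sum_sub_distrib] at h
  linarith

end Bellman

theorem Matrix.vecMul_gram_eq_zero {ι E : Type*} [Fintype ι] [NormedAddCommGroup E]
    [InnerProductSpace ℝ E] {v : ι → E} {d : ι → ℝ} (h : ∑ i, d i • v i = 0) :
    d ᵥ* gram ℝ v = 0 := by
  funext j
  have hj : ∑ i, d i * ⟪v i, v j⟫ = ⟪∑ i, d i • v i, v j⟫ := by
    simp only [sum_inner, real_inner_smul_left]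
  simpa [vecMul, dotProduct, gram, h] using hj

theorem Matrix.dotProduct_eq_zero_of_vecMul_eq_zero {ι : Type*} [Fintype ι] {M : Matrix ι ι ℝ}
    {d e : ι → ℝ} {lam : ℝ} (hd : d ᵥ* M = 0) (he : M *ᵥ e = lam • e) (hlam : lam ≠ 0) :
    d ⬝ᵥ e = 0 := by
  have h : lam * (d ⬝ᵥ e) = 0 := by
    rw [← smul_eq_mul, ← dotProduct_smul, ← he, dotProduct_mulVec, hd, zero_dotProduct]
  exact (mul_eq_zero.1 h).resolve_left hlam

theorem Matrix.PosDef.eq_zero_of_vecMul_eq_zero {ι : Type*} [Fintype ι] {M : Matrix ι ι ℝ}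
    (hM : M.PosDef) {d : ι → ℝ} (hd : d ᵥ* M = 0) : d = 0 := by
  by_contra hne
  have hpos := hM.dotProduct_mulVec_pos hne
  rw [star_trivial, dotProduct_mulVec, hd, zero_dotProduct] at hpos
  exact lt_irrefl 0 hpos

theorem mpg_global_optimality_general
    {S A : Type*} [Fintype S] [Fintype A] [Nonempty A]
    (τ : ℝ) (hτ : 0 < τ)
    (pibar : S → A → ℝ) (hpibar_pos : ∀ s a, 0 < pibar s a)
    (r : A → S → ℝ)
    (p : S → A → S → ℝ)
    (n : ℕ) (m : ℕ) (hm : 1 ≤ m) (hmn : m ≤ n)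
    (P : ℕ) (ψ : A → S → EuclideanSpace ℝ (Fin P))
    -- the extended policy, as a function of the parameter `θ^{(m)}` of its
    -- `m`-step component; the other components do not depend on `θ^{(m)}`
    (Pol : EuclideanSpace ℝ (Fin P) → ℕ → S → A → ℝ)
    (hPolm : ∀ θ s a, Pol θ m s a =
      pibar s a * Real.exp (⟪θ, ψ a s⟫ / τ) /
        ∑ a', pibar s a' * Real.exp (⟪θ, ψ a' s⟫ / τ))
    (hPolfix : ∀ θ θ' j, j ≠ m → Pol θ j = Pol θ' j)
    -- value and Q functions of the extended policy, defined recursively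
    (V : EuclideanSpace ℝ (Fin P) → ℕ → S → ℝ)
    (Q : EuclideanSpace ℝ (Fin P) → ℕ → A → S → ℝ)
    (hV0 : ∀ θ s, V θ 0 s = 0)
    (hQ : ∀ θ j a s, Q θ (j + 1) a s = r a s + ∑ s', p s a s' * V θ j s')
    (hV : ∀ θ j s, V θ (j + 1) s = ∑ a, Pol θ (j + 1) s a *
      (Q θ (j + 1) a s - τ * Real.log (Pol θ (j + 1) s a / pibar s a)))
    -- occupancy weights (uniform unnormalized initial distribution)
    (ρ : EuclideanSpace ℝ (Fin P) → ℕ → S → ℝ)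
    (hρ0 : ∀ θ s, ρ θ 0 s = 1)
    (hρ : ∀ θ k s', ρ θ (k + 1) s' =
      ∑ s, ρ θ k s * ∑ a, Pol θ (n - k) s a * p s a s')
    -- optimal extended policy and its value and Q functions, defined recursively
    (Vstar : ℕ → S → ℝ) (Qstar : ℕ → A → S → ℝ) (pistar : ℕ → S → A → ℝ)
    (hVstar0 : ∀ s, Vstar 0 s = 0)
    (hQstar : ∀ j a s, Qstar (j + 1) a s = r a s + ∑ s', p s a s' * Vstar j s')
    (hpistar : ∀ j s a, pistar (j + 1) s a =
      pibar s a * Real.exp (Qstar (j + 1) a s / τ) /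
        ∑ a', pibar s a' * Real.exp (Qstar (j + 1) a' s / τ))
    (hVstar : ∀ j s, Vstar (j + 1) s = ∑ a, pistar (j + 1) s a *
      (Qstar (j + 1) a s - τ * Real.log (pistar (j + 1) s a / pibar s a)))
    -- the kernel matrix of the `m`-step feature map
    (M : Matrix (A × S) (A × S) ℝ)
    (hM : ∀ x y : A × S, M x y = ⟪ψ x.1 x.2, ψ y.1 y.2⟫)
    (θ : EuclideanSpace ℝ (Fin P))
    -- the lower-step policies are optimal
    (hlow : ∀ k, 1 ≤ k → k ≤ m - 1 → Pol θ k = pistar k)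
    -- `θ^{(m)}` is a critical point of `J_n`
    (hcrit : gradient (fun θ' => ∑ s, V θ' n s) θ = 0)
    (d : A × S → ℝ)
    (hd : ∀ a s, d (a, s) = ρ θ (n - m) s * Pol θ m s a *
      (Real.log (Pol θ m s a / pistar m s a)
        - ∑ b, Pol θ m s b * Real.log (Pol θ m s b / pistar m s b))) :
    (∀ (lam : ℝ) (e : A × S → ℝ), e ≠ 0 → M.mulVec e = lam • e → 0 < lam →
        ∑ x, d x * e x = 0) ∧
      (M.PosDef → (∀ s, 0 < ρ θ (n - m) s) →
        ∀ s a, Pol θ m s a = pistar m s a) := by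
  obtain ⟨k, rfl⟩ : ∃ k, m = k + 1 := ⟨m - 1, by omega⟩
  have hVrec : ∀ θ' j, V θ' (j + 1) = bellman τ pibar r p (Pol θ' (j + 1)) (V θ' j) :=
    fun θ' j => funext fun s => by simp only [hV, hQ, bellman]
  have hVstarrec : ∀ j, Vstar (j + 1) = bellman τ pibar r p (pistar (j + 1)) (Vstar j) :=
    fun j => funext fun s => by simp only [hVstar, hQstar, bellman]
  have hPolgibbs : ∀ θ' s, Pol θ' (k + 1) s = gibbs (pibar s) τ (fun a => ⟪θ', ψ a s⟫) :=
    fun θ' s => funext (hPolm θ' s)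
  have hpistargibbs : ∀ s, pistar (k + 1) s = gibbs (pibar s) τ (Qstar (k + 1) · s) :=
    fun s => funext (hpistar k s)
  have hVk : ∀ θ', V θ' k = Vstar k := fun θ' =>
    eq_of_bellman_recursion τ pibar r p (funext fun s => by rw [hV0, hVstar0]) (hVrec θ')
      hVstarrec fun j hj hjk => (hPolfix θ' θ j (by omega)).trans (hlow j hj hjk)
  have hVm : ∀ θ' s, V θ' (k + 1) s = τ * log (partitionFn (pibar s) τ (Qstar (k + 1) · s)) -
      τ * klDiv (Pol θ' (k + 1) s) (pistar (k + 1) s) := fun θ' s => by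
    rw [hV, hpistargibbs, ← sum_mul_sub_log_div_eq (hpibar_pos s) hτ.ne' _
      (by rw [hPolgibbs]; exact sum_gibbs (hpibar_pos s) τ _)]
    simp only [hQ, hQstar, hVk]
  have hpistar_ne : ∀ s a, pistar (k + 1) s a ≠ 0 := fun s a => by
    rw [hpistargibbs]; exact (gibbs_pos (hpibar_pos s) τ _ a).ne'
  set F := fun θ' => ∑ s, ρ θ (n - (k + 1)) s * klDiv (Pol θ' (k + 1) s) (pistar (k + 1) s)
  have hF : HasGradientAt F (τ⁻¹ • ∑ s, ∑ a, d (a, s) • ψ a s) θ := by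
    simpa only [F, hd, hPolgibbs, klDiv] using
      hasGradientAt_sum_mul_klDiv_gibbs hpibar_pos τ (ρ θ (n - (k + 1))) hpistar_ne ψ θ
  have hJF : (fun θ' => ∑ s, V θ' n s) = fun θ' => (∑ s, V θ n s + τ * F θ) - τ * F θ' := by
    funext θ'
    rw [sum_eq_add_sum_mul_sub_of_bellman_recursion τ pibar r p hVrec hmn hPolfix
      (funext (hρ0 θ)) (fun i => funext (hρ θ i)) θ', add_sub_assoc]
    simp only [F, hVm, mul_sum, ← sum_sub_distrib]
    exact congrArg _ (sum_congr rfl fun s _ => by ring)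
  have hdψ : ∑ x : A × S, d x • ψ x.1 x.2 = 0 := by
    have hgrad : HasGradientAt (fun θ' => ∑ s, V θ' n s) (-(∑ s, ∑ a, d (a, s) • ψ a s)) θ := by
      rw [hJF]
      refine ((hF.hasFDerivAt.const_mul τ).const_sub _).congr_fderiv ?_
      simp [smul_inv_smul₀ hτ.ne']
    rw [Fintype.sum_prod_type, sum_comm, ← neg_eq_zero, ← hgrad.gradient, hcrit]
  have hdM : d ᵥ* M = 0 := by
    rw [show M = gram ℝ (fun x : A × S => ψ x.1 x.2) from Matrix.ext hM]
    exact vecMul_gram_eq_zero hdψ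
  refine ⟨fun lam e _ he hlam => dotProduct_eq_zero_of_vecMul_eq_zero hdM he hlam.ne',
    fun hMpd hρpos s => congrFun ?_⟩
  rw [hPolgibbs, hpistargibbs]
  refine eq_of_forall_mul_log_div_sub_klDiv_eq_zero (gibbs_pos (hpibar_pos s) τ _)
    (gibbs_pos (hpibar_pos s) τ _) (sum_gibbs (hpibar_pos s) τ _) (sum_gibbs (hpibar_pos s) τ _)
    (hρpos s) fun a => ?_
  simpa only [hd, hPolgibbs, hpistargibbs, klDiv, Pi.zero_apply] using
    congrFun (hMpd.eq_zero_of_vecMul_eq_zero hdM) (a, s)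

/-- Global optimality of MPG (finite state space, critical-point
form): if the components `π^{(1)},…,π^{(m−1)}` are optimal and `θ^{(m)}` is a
critical point of `J_n`, then
`d(a,s) = ρ^{(n−m)}(s) π^{(m)}(a|s) (log(π^{(m)}(a|s)/π*^{(m)}(a|s)) −
D_KL(π^{(m)}‖π*^{(m)})(s))` is orthogonal to every eigenvector of the kernel
matrix `(Θ^{(m)}((a,s),(a',s')))` with positive eigenvalue; in particular, if
that matrix is positive definite and `ρ^{(n−m)} > 0` everywhere, then
`π^{(m)} = π*^{(m)}`. -/
theorem mpg_global_optimality
    {S A : Type*} [Fintype S] [Fintype A] [Nonempty S] [Nonempty A]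
    (τ : ℝ) (hτ : 0 < τ)
    (pibar : S → A → ℝ) (hpibar_pos : ∀ s a, 0 < pibar s a)
    (hpibar_sum : ∀ s, ∑ a, pibar s a = 1)
    (r : A → S → ℝ)
    (p : S → A → S → ℝ) (hp_nonneg : ∀ s a s', 0 ≤ p s a s')
    (hp_sum : ∀ s a, ∑ s', p s a s' = 1)
    (n : ℕ) (m : ℕ) (hm : 1 ≤ m) (hmn : m ≤ n)
    (P : ℕ) (ψ : A → S → EuclideanSpace ℝ (Fin P))
    -- the extended policy, as a function of the parameter `θ^{(m)}` of its
    -- `m`-step component; the other components do not depend on `θ^{(m)}`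
    (Pol : EuclideanSpace ℝ (Fin P) → ℕ → S → A → ℝ)
    (hPolm : ∀ θ s a, Pol θ m s a =
      pibar s a * Real.exp (⟪θ, ψ a s⟫ / τ) /
        ∑ a', pibar s a' * Real.exp (⟪θ, ψ a' s⟫ / τ))
    (hPolfix : ∀ θ θ' j, j ≠ m → Pol θ j = Pol θ' j)
    (hPol_pos : ∀ θ j s a, 0 < Pol θ j s a) (hPol_sum : ∀ θ j s, ∑ a, Pol θ j s a = 1)
    -- value and Q functions of the extended policy, defined recursively
    (V : EuclideanSpace ℝ (Fin P) → ℕ → S → ℝ)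
    (Q : EuclideanSpace ℝ (Fin P) → ℕ → A → S → ℝ)
    (hV0 : ∀ θ s, V θ 0 s = 0)
    (hQ : ∀ θ j a s, Q θ (j + 1) a s = r a s + ∑ s', p s a s' * V θ j s')
    (hV : ∀ θ j s, V θ (j + 1) s = ∑ a, Pol θ (j + 1) s a *
      (Q θ (j + 1) a s - τ * Real.log (Pol θ (j + 1) s a / pibar s a)))
    -- occupancy weights (uniform unnormalized initial distribution)
    (ρ : EuclideanSpace ℝ (Fin P) → ℕ → S → ℝ)
    (hρ0 : ∀ θ s, ρ θ 0 s = 1)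
    (hρ : ∀ θ k s', ρ θ (k + 1) s' =
      ∑ s, ρ θ k s * ∑ a, Pol θ (n - k) s a * p s a s')
    -- optimal extended policy and its value and Q functions, defined recursively
    (Vstar : ℕ → S → ℝ) (Qstar : ℕ → A → S → ℝ) (pistar : ℕ → S → A → ℝ)
    (hVstar0 : ∀ s, Vstar 0 s = 0)
    (hQstar : ∀ j a s, Qstar (j + 1) a s = r a s + ∑ s', p s a s' * Vstar j s')
    (hpistar : ∀ j s a, pistar (j + 1) s a =
      pibar s a * Real.exp (Qstar (j + 1) a s / τ) /
        ∑ a', pibar s a' * Real.exp (Qstar (j + 1) a' s / τ))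
    (hVstar : ∀ j s, Vstar (j + 1) s = ∑ a, pistar (j + 1) s a *
      (Qstar (j + 1) a s - τ * Real.log (pistar (j + 1) s a / pibar s a)))
    -- the kernel matrix of the `m`-step feature map
    (M : Matrix (A × S) (A × S) ℝ)
    (hM : ∀ x y : A × S, M x y = ⟪ψ x.1 x.2, ψ y.1 y.2⟫)
    (θ : EuclideanSpace ℝ (Fin P))
    -- the lower-step policies are optimal
    (hlow : ∀ k, 1 ≤ k → k ≤ m - 1 → Pol θ k = pistar k)
    -- `θ^{(m)}` is a critical point of `J_n`
    (hcrit : gradient (fun θ' => ∑ s, V θ' n s) θ = 0)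
    (d : A × S → ℝ)
    (hd : ∀ a s, d (a, s) = ρ θ (n - m) s * Pol θ m s a *
      (Real.log (Pol θ m s a / pistar m s a)
        - ∑ b, Pol θ m s b * Real.log (Pol θ m s b / pistar m s b))) :
    (∀ (lam : ℝ) (e : A × S → ℝ), e ≠ 0 → M.mulVec e = lam • e → 0 < lam →
        ∑ x, d x * e x = 0) ∧
      (M.PosDef → (∀ s, 0 < ρ θ (n - m) s) →
        ∀ s a, Pol θ m s a = pistar m s a) :=
  mpg_global_optimality_general τ hτ pibar hpibar_pos r p n m hm hmn P ψ Pol hPolm hPolfix V Q hV0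
    hQ hV ρ hρ0 hρ Vstar Qstar pistar hVstar0 hQstar hpistar hVstar M hM θ hlow hcrit d hd
end
end
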